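/- Let r > 0 and n ≥ 1. Let X_1,…,X_n and Y_1,…,Y_n be nonempty compact metric spaces each of diameter at most r, let Z be a compact (r,n)-stacked space over X_1,…,X_n and W a compact (r,n)-stacked space over Y_1,…,Y_n. Then d_GH(Z, W) ≥ max_{1≤k≤n} d_GH(X_k, Y_k). -/
import Mathlib


open GromovHausdorff

universe u v w

universe u1 u2

/-- `Z` (with two distinguished points `p true = p¹` and `p false = p⁻¹`, and pieces
`P 0, …, P (n-1)`, where `P k` plays the role of `Z_{k+1}`) is an `(r,n)`-stacked space
over the nonempty compact metric spaces `X 0, …, X (n-1)` (each of diameter at most `r`):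
* `dist p¹ p⁻¹ = 3r`;
* the pieces are pairwise disjoint and do not contain `p¹`, `p⁻¹`;
* `{p¹, p⁻¹}` together with the pieces cover `Z`;
* the piece `P k` with the induced metric is isometric to `X k`;
* `dist (p^s) z = 5r(k+1)` for every `z ∈ P k` and both `s`;
* `dist z w = 5r|k - l|` for `z ∈ P k`, `w ∈ P l` with `k ≠ l`. -/
def IsStackedSpace (r : ℝ) {n : ℕ} (X : Fin n → Type u) [∀ k, MetricSpace (X k)]
    (Z : Type v) [MetricSpace Z] (p : Bool → Z) (P : Fin n → Set Z) : Prop :=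
  dist (p true) (p false) = 3 * r ∧
  (Pairwise fun k l : Fin n => Disjoint (P k) (P l)) ∧
  (∀ (k : Fin n) (s : Bool), p s ∉ P k) ∧
  ({p true, p false} ∪ ⋃ k, P k) = Set.univ ∧
  (∀ k : Fin n, Nonempty (X k ≃ᵢ (P k : Set Z))) ∧
  (∀ (k : Fin n) (s : Bool), ∀ z ∈ P k, dist (p s) z = 5 * r * ((k : ℕ) + 1)) ∧
  (∀ k l : Fin n, k ≠ l → ∀ z ∈ P k, ∀ w ∈ P l,
    dist z w = 5 * r * |((k : ℕ) : ℝ) - ((l : ℕ) : ℝ)|)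

section AuxGlue

open Metric Set

private def MSum (A : Type u) (B : Type v) := A ⊕ B

private def MSum.inl {A : Type u} {B : Type v} (a : A) : MSum A B := Sum.inl a
private def MSum.inr {A : Type u} {B : Type v} (b : B) : MSum A B := Sum.inr b

private def mSumDist {A : Type u} {B : Type v} [Dist A] [Dist B] (c : ℝ) :
    MSum A B → MSum A B → ℝ
  | .inl a, .inl a' => dist a a'
  | .inr b, .inr b' => dist b b'
  | _, _ => c

private lemma ghDist_le_of_dist_le {A : Type u} {B : Type v}
    [MetricSpace A] [CompactSpace A] [Nonempty A]
    [MetricSpace B] [CompactSpace B] [Nonempty B] {c : ℝ} (hc : 0 < c)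
    (hA : ∀ a a' : A, dist a a' ≤ 2 * c) (hB : ∀ b b' : B, dist b b' ≤ 2 * c) :
    ghDist A B ≤ c := by
  letI : MetricSpace (MSum A B) :=
    { dist := mSumDist c
      dist_self := by rintro (a | b) <;> simp [mSumDist]
      dist_comm := by rintro (a | b) (a' | b') <;> simp [mSumDist, dist_comm]
      dist_triangle := by
        rintro (a | b) (a' | b') (a'' | b'') <;>
          simp only [mSumDist] <;>
          first
            | exact dist_triangle _ _ _
            | exact le_add_of_nonneg_left dist_nonneg
            | exact le_add_of_nonneg_right dist_nonneg
            | linarith [hA a a'']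
            | linarith [hB b b'']
      eq_of_dist_eq_zero := by
        rintro (a | b) (a' | b') h <;> simp only [mSumDist] at h
        · rw [eq_of_dist_eq_zero h]
        · exact absurd h hc.ne'
        · exact absurd h hc.ne'
        · rw [eq_of_dist_eq_zero h] }
  have hil : Isometry (MSum.inl : A → MSum A B) := Isometry.of_dist_eq fun _ _ => rfl
  have hir : Isometry (MSum.inr : B → MSum A B) := Isometry.of_dist_eq fun _ _ => rfl
  haveI : CompactSpace (MSum A B) := by
    constructor
    have h : (Set.univ : Set (MSum A B)) = range (MSum.inl : A → MSum A B) ∪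
        range (MSum.inr : B → MSum A B) := by
      ext x
      rcases x with a | b
      · exact ⟨fun _ => Or.inl ⟨a, rfl⟩, fun _ => trivial⟩
      · exact ⟨fun _ => Or.inr ⟨b, rfl⟩, fun _ => trivial⟩
    rw [h]
    exact (isCompact_range hil.continuous).union (isCompact_range hir.continuous)
  obtain ⟨a0⟩ := ‹Nonempty A›
  obtain ⟨b0⟩ := ‹Nonempty B›
  haveI : Nonempty (MSum A B) := ⟨MSum.inl a0⟩
  calc ghDist A B ≤ hausdorffDist (range (MSum.inl : A → MSum A B))
        (range (MSum.inr : B → MSum A B)) := ghDist_le_hausdorffDist hil hir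
    _ ≤ c := by
        refine hausdorffDist_le_of_mem_dist hc.le ?_ ?_
        · rintro x ⟨a, rfl⟩
          exact ⟨MSum.inr b0, mem_range_self _, le_of_eq rfl⟩
        · rintro x ⟨b, rfl⟩
          exact ⟨MSum.inl a0, mem_range_self _, le_of_eq rfl⟩

end AuxGlue

section AuxKey

open Metric Set

private lemma one_le_abs_natCast_sub {a b : ℕ} (h : a ≠ b) :
    (1 : ℝ) ≤ |(a : ℝ) - (b : ℝ)| := by
  rcases h.lt_or_gt with h | h
  · have h1 : a + 1 ≤ b := h
    have h2 : (a : ℝ) + 1 ≤ (b : ℝ) := by exact_mod_cast h1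
    calc (1 : ℝ) ≤ (b : ℝ) - a := by linarith
      _ ≤ |(a : ℝ) - b| := by rw [abs_sub_comm]; exact le_abs_self _
  · have h1 : b + 1 ≤ a := h
    have h2 : (b : ℝ) + 1 ≤ (a : ℝ) := by exact_mod_cast h1
    calc (1 : ℝ) ≤ (a : ℝ) - b := by linarith
      _ ≤ |(a : ℝ) - b| := le_abs_self _

/-- Key matching lemma: if both stacked spaces are isometrically embedded in a common
space `C` so that every point of `Z` is `ε`-close to a point of `W` (with `ε < r`), then
every point of the piece `P k` is `ε`-close to a point of the corresponding piece `Q k`. -/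
private lemma stacked_close (r ε : ℝ) (hr : 0 < r) (hεr : ε < r) {n : ℕ}
    (X : Fin n → Type u1) [∀ k, MetricSpace (X k)]
    (Y : Fin n → Type u2) [∀ k, MetricSpace (Y k)] [∀ k, CompactSpace (Y k)]
    (hdY : ∀ k, Metric.diam (Set.univ : Set (Y k)) ≤ r)
    {Z : Type v} [MetricSpace Z] {W : Type w} [MetricSpace W]
    {p : Bool → Z} {P : Fin n → Set Z} (hZ : IsStackedSpace r X Z p P)
    {q : Bool → W} {Q : Fin n → Set W} (hW : IsStackedSpace r Y W q Q)
    {C : Type*} [MetricSpace C] {f : Z → C} {g : W → C}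
    (hf : Isometry f) (hg : Isometry g)
    (H : ∀ z : Z, ∃ w : W, dist (f z) (g w) < ε)
    (k : Fin n) (z : Z) (hz : z ∈ P k) : ∃ w ∈ Q k, dist (f z) (g w) < ε := by
  obtain ⟨hZpp, -, -, -, -, hZpole, -⟩ := hZ
  obtain ⟨hWpp, -, -, hWcov, hWiso, hWpole, hWpiece⟩ := hW
  -- every point of `W` is a pole or lies in some piece
  have classify : ∀ w : W, (∃ s : Bool, w = q s) ∨ ∃ l, w ∈ Q l := by
    intro w
    have hw : w ∈ ({q true, q false} ∪ ⋃ l, Q l) := by rw [hWcov]; exact mem_univ w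
    rcases hw with hw | hw
    · rcases hw with hw | hw
      · exact Or.inl ⟨true, hw⟩
      · exact Or.inl ⟨false, hw⟩
    · obtain ⟨s, ⟨l, rfl⟩, hs⟩ := hw
      exact Or.inr ⟨l, hs⟩
  -- pieces of `W` have diameter at most `r`
  have qdiam : ∀ l, ∀ w ∈ Q l, ∀ w' ∈ Q l, dist w w' ≤ r := by
    intro l w hw w' hw'
    obtain ⟨e⟩ := hWiso l
    have h1 : dist w w' = dist (e.symm ⟨w, hw⟩) (e.symm ⟨w', hw'⟩) := by
      rw [e.symm.dist_eq]; rfl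
    rw [h1]
    exact le_trans (dist_le_diam_of_mem isCompact_univ.isBounded (mem_univ _) (mem_univ _))
      (hdY l)
  -- distance between the two poles of `W`
  have hqq : ∀ s s' : Bool, dist (q s) (q s') ≤ 3 * r := by
    intro s s'
    cases s <;> cases s' <;>
      first
        | (rw [dist_self]; linarith)
        | (rw [dist_comm, hWpp])
        | (rw [hWpp])
  -- the image of `p true` is `ε`-close to a pole of `W`
  obtain ⟨w1, hw1⟩ := H (p true)
  obtain ⟨w2, hw2⟩ := H (p false)
  have hε0 : 0 < ε := lt_of_le_of_lt dist_nonneg hw1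
  have hfpp : dist (f (p true)) (f (p false)) = 3 * r := by rw [hf.dist_eq]; exact hZpp
  have hgw : dist (g w1) (g w2) = dist w1 w2 := hg.dist_eq _ _
  have t1 := dist_triangle4 (f (p true)) (g w1) (g w2) (f (p false))
  have t2 := dist_triangle4 (g w1) (f (p true)) (f (p false)) (g w2)
  have c1 : dist (g w1) (f (p true)) = dist (f (p true)) (g w1) := dist_comm _ _
  have c2 : dist (g w2) (f (p false)) = dist (f (p false)) (g w2) := dist_comm _ _
  have hlo : 3 * r - 2 * ε < dist w1 w2 := by linarith
  have hhi : dist w1 w2 < 3 * r + 2 * ε := by linarith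
  have hpole : ∃ s : Bool, dist (f (p true)) (g (q s)) < ε := by
    rcases classify w1 with ⟨s, rfl⟩ | ⟨l, h1⟩
    · exact ⟨s, hw1⟩
    · exfalso
      have hl0 : (0 : ℝ) ≤ ((l : ℕ) : ℝ) := Nat.cast_nonneg _
      rcases classify w2 with ⟨s, rfl⟩ | ⟨l', h2⟩
      · have hd : dist w1 (q s) = 5 * r * ((l : ℕ) + 1) := by
          rw [dist_comm]; exact hWpole l s w1 h1
        nlinarith
      · by_cases hll : l = l'
        · subst hll
          have := qdiam l w1 h1 w2 h2
          linarith
        · have hd := hWpiece l l' hll w1 h1 w2 h2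
          have habs := one_le_abs_natCast_sub
            (show (l : ℕ) ≠ (l' : ℕ) from fun hc => hll (Fin.ext hc))
          nlinarith
  obtain ⟨s1, hs1⟩ := hpole
  -- now match the piece of `z`
  obtain ⟨w, hw⟩ := H z
  have hk0 : (0 : ℝ) ≤ ((k : ℕ) : ℝ) := Nat.cast_nonneg _
  have hfz : dist (f (p true)) (f z) = 5 * r * ((k : ℕ) + 1) := by
    rw [hf.dist_eq]; exact hZpole k true z hz
  have hgq : dist (g (q s1)) (g w) = dist (q s1) w := hg.dist_eq _ _
  have t3 := dist_triangle4 (g (q s1)) (f (p true)) (f z) (g w)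
  have t4 := dist_triangle4 (f (p true)) (g (q s1)) (g w) (f z)
  have c3 : dist (g (q s1)) (f (p true)) = dist (f (p true)) (g (q s1)) := dist_comm _ _
  have c4 : dist (g w) (f z) = dist (f z) (g w) := dist_comm _ _
  have hlo2 : 5 * r * ((k : ℕ) + 1) - 2 * ε < dist (q s1) w := by linarith
  have hhi2 : dist (q s1) w < 5 * r * ((k : ℕ) + 1) + 2 * ε := by linarith
  rcases classify w with ⟨s, rfl⟩ | ⟨l, hl⟩
  · exfalso
    have := hqq s1 s
    nlinarith
  · have hd := hWpole l s1 w hl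
    have hlk : l = k := by
      by_contra hlk
      have habs := one_le_abs_natCast_sub
        (show (l : ℕ) ≠ (k : ℕ) from fun hc => hlk (Fin.ext hc))
      rcases le_abs.1 habs with h1 | h1 <;> nlinarith
    subst hlk
    exact ⟨w, hl, hw⟩

end AuxKey

/-- For `r > 0`, `n ≥ 1`, nonempty compact metric spaces
`X k`, `Y k` of diameter at most `r`, a compact `(r,n)`-stacked space `Z` over the
`X k` and a compact `(r,n)`-stacked space `W` over the `Y k`, one has
`d_GH(Z, W) ≥ max_k d_GH(X k, Y k)`. -/
theorem ghDist_stackedSpace_ge (r : ℝ) (hr : 0 < r) (n : ℕ) (hn : 1 ≤ n)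
    (X Y : Fin n → Type u)
    [∀ k, MetricSpace (X k)] [∀ k, CompactSpace (X k)] [∀ k, Nonempty (X k)]
    [∀ k, MetricSpace (Y k)] [∀ k, CompactSpace (Y k)] [∀ k, Nonempty (Y k)]
    (hdX : ∀ k, Metric.diam (Set.univ : Set (X k)) ≤ r)
    (hdY : ∀ k, Metric.diam (Set.univ : Set (Y k)) ≤ r)
    (Z : Type v) [MetricSpace Z] [CompactSpace Z] [Nonempty Z]
    (W : Type w) [MetricSpace W] [CompactSpace W] [Nonempty W]
    (p : Bool → Z) (P : Fin n → Set Z) (hZ : IsStackedSpace r X Z p P)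
    (q : Bool → W) (Q : Fin n → Set W) (hW : IsStackedSpace r Y W q Q) :
    ghDist Z W ≥ ⨆ k : Fin n, ghDist (X k) (Y k) := by
  classical
  open Metric Set in
  haveI : Nonempty (Fin n) := ⟨⟨0, hn⟩⟩
  have hd0 : (0 : ℝ) ≤ ghDist Z W := by
    rw [← hausdorffDist_optimal (X := Z) (Y := W)]; exact hausdorffDist_nonneg
  refine ciSup_le fun k => ?_
  -- crude bound: both `X k` and `Y k` have diameter at most `r`
  have hhalf : ghDist (X k) (Y k) ≤ r / 2 := by
    refine ghDist_le_of_dist_le (by linarith) ?_ ?_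
    · intro a a'
      have := le_trans (dist_le_diam_of_mem isCompact_univ.isBounded
        (mem_univ a) (mem_univ a')) (hdX k)
      linarith
    · intro b b'
      have := le_trans (dist_le_diam_of_mem isCompact_univ.isBounded
        (mem_univ b) (mem_univ b')) (hdY k)
      linarith
  by_cases hcase : ghDist Z W < r
  · -- the interesting case
    have key : ∀ ε, ghDist Z W < ε → ε < r → ghDist (X k) (Y k) ≤ ε := by
      intro ε hε1 hε2
      set f := optimalGHInjl Z W with hfdef
      set g := optimalGHInjr Z W with hgdef
      have hf : Isometry f := isometry_optimalGHInjl Z W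
      have hg : Isometry g := isometry_optimalGHInjr Z W
      have hopt : hausdorffDist (range f) (range g) = ghDist Z W := hausdorffDist_optimal (X := Z) (Y := W)
      have hfin : EMetric.hausdorffEdist (range f) (range g) ≠ ⊤ :=
        hausdorffEdist_ne_top_of_nonempty_of_bounded (range_nonempty _) (range_nonempty _)
          (isCompact_range hf.continuous).isBounded (isCompact_range hg.continuous).isBounded
      have H1 : ∀ z : Z, ∃ w : W, dist (f z) (g w) < ε := by
        intro z
        obtain ⟨y, hy, hlt⟩ := exists_dist_lt_of_hausdorffDist_lt (mem_range_self z)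
          (by rw [hopt]; exact hε1) hfin
        obtain ⟨w, rfl⟩ := hy
        exact ⟨w, hlt⟩
      have H2 : ∀ w : W, ∃ z : Z, dist (g w) (f z) < ε := by
        intro w
        obtain ⟨y, hy, hlt⟩ := exists_dist_lt_of_hausdorffDist_lt' (mem_range_self w)
          (by rw [hopt]; exact hε1) hfin
        obtain ⟨z, rfl⟩ := hy
        exact ⟨z, by rwa [dist_comm]⟩
      have key1 := stacked_close r ε hr hε2 X Y hdY hZ hW hf hg H1 k
      have key2 := stacked_close r ε hr hε2 Y X hdX hW hZ hg hf H2 k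
      obtain ⟨eX⟩ := hZ.2.2.2.2.1 k
      obtain ⟨eY⟩ := hW.2.2.2.2.1 k
      have hΦ : Isometry (fun a : X k => f ((eX a : Z))) :=
        (hf.comp isometry_subtype_coe).comp eX.isometry
      have hΨ : Isometry (fun b : Y k => g ((eY b : W))) :=
        (hg.comp isometry_subtype_coe).comp eY.isometry
      refine le_trans (ghDist_le_hausdorffDist hΦ hΨ) ?_
      refine hausdorffDist_le_of_mem_dist (le_trans hd0 hε1.le) ?_ ?_
      · rintro x ⟨a, rfl⟩
        obtain ⟨w, hwQ, hwd⟩ := key1 (eX a) (eX a).2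
        refine ⟨g w, ⟨eY.symm ⟨w, hwQ⟩, ?_⟩, hwd.le⟩
        simp
      · rintro x ⟨b, rfl⟩
        obtain ⟨z, hzP, hzd⟩ := key2 (eY b) (eY b).2
        refine ⟨f z, ⟨eX.symm ⟨z, hzP⟩, ?_⟩, ?_⟩
        · simp
        · exact hzd.le
    by_contra hcon
    push_neg at hcon
    obtain ⟨ε, hε1, hε2⟩ := exists_between hcon
    have hεr : ε < r := lt_of_lt_of_le hε2 (le_trans hhalf (by linarith))
    exact absurd (key ε hε1 hεr) (not_le.2 hε2)
  · push_neg at hcase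
    linarith
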